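/- arXiv:1311.7466 — 5 statements merged into one kernel-verified Lean document; each statement's English description precedes it below -/
import Mathlib

section
/- For an ω-dimensional linear network code on a single-source acyclic network G=(V,E), the following two conditions are equivalent: (1) for every nonempty collection ξ⊆E of channels with |ξ|=min{ω, C_ξ}, the global encoding kernels f_e, e∈ξ, are linearly independent; (2) for every nonempty collection ξ'⊆E of channels, dim(span{f_e : e∈ξ'}) = min{ω, C_{ξ'}}. -/
open scoped BigOperators

/-- A single-source finite acyclic directed multigraph with unit-capacity channels.
Acyclicity is witnessed by a rank function compatible with channel adjacency, and the
source node `s` has no incoming channels. -/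
structure Network (V : Type*) (E : Type*) where
  tail : E → V
  head : E → V
  s : V
  no_in_source : ∀ e, head e ≠ s
  rk : E → ℕ
  acyclic : ∀ d e, head d = tail e → rk d < rk e

namespace Network

variable {V : Type*} {E : Type*}

/-- `p` is a nonempty directed path (a list of channels matching head-to-tail). -/
def IsPath (N : Network V E) (p : List E) : Prop :=
  p ≠ [] ∧ p.Chain' fun d e => N.head d = N.tail e

/-- `p` is a nonempty directed path starting at node `u`. -/
def PathFrom (N : Network V E) (p : List E) (u : V) : Prop :=
  N.IsPath p ∧ ∀ e ∈ p.head?, N.tail e = u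

variable [Fintype V] [Fintype E] [DecidableEq V] [DecidableEq E]

/-- `C` is a cut between the source and the collection `T` of nodes: after removing the
channels of `C` no directed path from the source reaches a node of `T`. -/
def IsCutNodes (N : Network V E) (C : Finset E) (T : Finset V) : Prop :=
  ∀ p : List E, N.PathFrom p N.s → (∃ e ∈ p.getLast?, N.head e ∈ T) → ∃ e ∈ p, e ∈ C

/-- The minimum cut capacity between the source and a collection `T` of nodes. -/
noncomputable def minCutNodes (N : Network V E) (T : Finset V) : ℕ :=
  sInf {n | ∃ C : Finset E, N.IsCutNodes C T ∧ C.card = n}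

/-- The minimum cut capacity `C_t` between the source and a node `t`. -/
noncomputable def minCutNode (N : Network V E) (t : V) : ℕ :=
  N.minCutNodes {t}

/-- `C` is a cut between the source and a collection `ξ` of channels (equivalently, a
cut between the source and the new nodes `n_e`, `e ∈ ξ`, in the network obtained by
subdividing every channel of `ξ`): every path from the source whose last channel lies
in `ξ` must meet `C`. -/
def IsCutChans (N : Network V E) (C : Finset E) (ξ : Finset E) : Prop :=
  ∀ p : List E, N.PathFrom p N.s → (∃ e ∈ p.getLast?, e ∈ ξ) → ∃ e ∈ p, e ∈ C

/-- The minimum cut capacity `C_ξ` between the source and a collection `ξ` of channels. -/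
noncomputable def minCutChans (N : Network V E) (ξ : Finset E) : ℕ :=
  sInf {n | ∃ C : Finset E, N.IsCutChans C ξ ∧ C.card = n}

end Network

section Codes

variable {V E : Type*} [Fintype V] [Fintype E] [DecidableEq V] [DecidableEq E]
variable (F : Type*) [Field F]

/-- `f` is the family of global encoding kernels of the `ω`-dimensional linear network
code with local encoding coefficients `k` (between adjacent real channels) and `ks`
(from the `ω` imaginary message channels at the source): the kernels of the imaginary
message channels form the standard basis of `F^ω` and
`f_e = ∑_{d ∈ In(tail e)} k_{d,e} • f_d`. -/
def IsGlobalKernel (N : Network V E) (ω : ℕ) (k : E → E → F) (ks : Fin ω → E → F)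
    (f : E → Fin ω → F) : Prop :=
  ∀ e, f e = (∑ d : E, if N.head d = N.tail e then k d e • f d else 0)
    + ∑ i : Fin ω, (if N.tail e = N.s then ks i e else 0) • (Pi.single i 1 : Fin ω → F)

/-- `f` is the family of extended global encoding kernels (coordinates indexed by
`Fin ω ⊕ E`, i.e. by `In(s) ∪ E`) of the `ω`-dimensional linear network
error-correction code with local encoding coefficients `k`, `ks`:
`f̃_e = ∑_{d ∈ In(tail e)} k_{d,e} • f̃_d + 1_e`. -/
def IsExtKernel (N : Network V E) (ω : ℕ) (k : E → E → F) (ks : Fin ω → E → F)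
    (f : E → (Fin ω ⊕ E) → F) : Prop :=
  ∀ e, f e = (∑ d : E, if N.head d = N.tail e then k d e • f d else 0)
    + (∑ i : Fin ω, (if N.tail e = N.s then ks i e else 0) • (Pi.single (Sum.inl i) 1 : (Fin ω ⊕ E) → F))
    + (Pi.single (Sum.inr e) 1 : (Fin ω ⊕ E) → F)

variable {ω : ℕ}

/-- The row of the decoding matrix `F̃_T` of a collection `T` of nodes indexed by
`d ∈ In(s) ∪ E` (extended by zero outside the coordinates `In(T)`). -/
def rowT (N : Network V E) (f : E → (Fin ω ⊕ E) → F) (T : Finset V)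
    (d : Fin ω ⊕ E) : E → F :=
  fun e => if N.head e ∈ T then f e d else 0

/-- The message space `Φ(T)` of a collection `T` of nodes. -/
def PhiT (N : Network V E) (f : E → (Fin ω ⊕ E) → F) (T : Finset V) :
    Submodule F (E → F) :=
  Submodule.span F (Set.range fun i : Fin ω => rowT F N f T (Sum.inl i))

/-- The error space `Δ(T, ρ)` of an error pattern `ρ` with respect to `T`. -/
def DeltaT (N : Network V E) (f : E → (Fin ω ⊕ E) → F) (T : Finset V)
    (ρ : Finset E) : Submodule F (E → F) :=
  Submodule.span F ((fun e => rowT F N f T (Sum.inr e)) '' (ρ : Set E))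

/-- The minimum distance `d_min^{(T)}` at a collection `T` of nodes. -/
noncomputable def dminT (N : Network V E) (f : E → (Fin ω ⊕ E) → F) (T : Finset V) : ℕ :=
  sInf {n | ∃ ρ : Finset E, ρ.card = n ∧ DeltaT F N f T ρ ⊓ PhiT F N f T ≠ ⊥}

/-- `ρ₁ ≺_T ρ₂` : `Δ(T,ρ₁) ⊆ Δ(T,ρ₂)` for every `ω`-dimensional `F`-valued LNEC code
on the network. -/
def DominatesT (N : Network V E) (ω : ℕ) (T : Finset V) (ρ₁ ρ₂ : Finset E) : Prop :=
  ∀ (k : E → E → F) (ks : Fin ω → E → F) (f : E → (Fin ω ⊕ E) → F),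
    IsExtKernel F N ω k ks f → DeltaT F N f T ρ₁ ≤ DeltaT F N f T ρ₂

/-- `rank_T(ρ)`, the rank of an error pattern with respect to `T`. -/
noncomputable def rankT (N : Network V E) (ω : ℕ) (T : Finset V) (ρ : Finset E) : ℕ :=
  sInf {n | ∃ ρ' : Finset E, DominatesT F N ω T ρ ρ' ∧ ρ'.card = n}

/-- The row of the decoding matrix `F̃_ξ` of a collection `ξ` of channels indexed by
`d ∈ In(s) ∪ E` (extended by zero outside the coordinates `ξ`). -/
def rowX (N : Network V E) (f : E → (Fin ω ⊕ E) → F) (ξ : Finset E)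
    (d : Fin ω ⊕ E) : E → F :=
  fun e => if e ∈ ξ then f e d else 0

/-- The message space `Φ(ξ)` of a collection `ξ` of channels. -/
def PhiX (N : Network V E) (f : E → (Fin ω ⊕ E) → F) (ξ : Finset E) :
    Submodule F (E → F) :=
  Submodule.span F (Set.range fun i : Fin ω => rowX F N f ξ (Sum.inl i))

/-- The error space `Δ(ξ, ρ)` of an error pattern `ρ` with respect to `ξ`. -/
def DeltaX (N : Network V E) (f : E → (Fin ω ⊕ E) → F) (ξ : Finset E)
    (ρ : Finset E) : Submodule F (E → F) :=
  Submodule.span F ((fun e => rowX F N f ξ (Sum.inr e)) '' (ρ : Set E))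

/-- The minimum distance `d_min^{(ξ)}` at a collection `ξ` of channels. -/
noncomputable def dminX (N : Network V E) (f : E → (Fin ω ⊕ E) → F) (ξ : Finset E) : ℕ :=
  sInf {n | ∃ ρ : Finset E, ρ.card = n ∧ DeltaX F N f ξ ρ ⊓ PhiX F N f ξ ≠ ⊥}

/-- `ρ₁ ≺_ξ ρ₂` : `Δ(ξ,ρ₁) ⊆ Δ(ξ,ρ₂)` for every `ω`-dimensional `F`-valued LNEC code
on the network. -/
def DominatesX (N : Network V E) (ω : ℕ) (ξ : Finset E) (ρ₁ ρ₂ : Finset E) : Prop :=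
  ∀ (k : E → E → F) (ks : Fin ω → E → F) (f : E → (Fin ω ⊕ E) → F),
    IsExtKernel F N ω k ks f → DeltaX F N f ξ ρ₁ ≤ DeltaX F N f ξ ρ₂

/-- `rank_ξ(ρ)`, the rank of an error pattern with respect to `ξ`. -/
noncomputable def rankX (N : Network V E) (ω : ℕ) (ξ : Finset E) (ρ : Finset E) : ℕ :=
  sInf {n | ∃ ρ' : Finset E, DominatesX F N ω ξ ρ ρ' ∧ ρ'.card = n}

/-- Regular LNEC code: `dim Φ(t) = ω` for every non-source node with `C_t ≥ ω`. -/
def Regular (N : Network V E) (f : E → (Fin ω ⊕ E) → F) : Prop :=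
  ∀ t : V, t ≠ N.s → ω ≤ N.minCutNode t →
    Module.finrank F (PhiT F N f ({t} : Finset V)) = ω

/-- Strongly regular LNEC code: `dim Φ(t) = min{ω, C_t}` for every non-source node. -/
def StronglyRegular (N : Network V E) (f : E → (Fin ω ⊕ E) → F) : Prop :=
  ∀ t : V, t ≠ N.s →
    Module.finrank F (PhiT F N f ({t} : Finset V)) = min ω (N.minCutNode t)

/-- Strongly sup-regular LNEC code: `dim Φ(T) = min{ω, C_T}` for every nonempty
collection of non-source nodes. -/
def StronglySupRegular (N : Network V E) (f : E → (Fin ω ⊕ E) → F) : Prop :=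
  ∀ T : Finset V, T.Nonempty → N.s ∉ T →
    Module.finrank F (PhiT F N f T) = min ω (N.minCutNodes T)

/-- Channel-regular LNEC code: `dim Φ(ξ) = min{ω, C_ξ}` for every nonempty collection
of channels. -/
def ChannelRegular (N : Network V E) (f : E → (Fin ω ⊕ E) → F) : Prop :=
  ∀ ξ : Finset E, ξ.Nonempty →
    Module.finrank F (PhiX F N f ξ) = min ω (N.minCutChans ξ)

/-- LNEC multicast MDS code. -/
def IsMulticastMDS (N : Network V E) (f : E → (Fin ω ⊕ E) → F) : Prop :=
  Regular F N f ∧ ∀ t : V, t ≠ N.s → ω ≤ N.minCutNode t →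
    dminT F N f {t} = N.minCutNode t - ω + 1

/-- LNEC broadcast MDS code. -/
def IsBroadcastMDS (N : Network V E) (f : E → (Fin ω ⊕ E) → F) : Prop :=
  StronglyRegular F N f ∧ ∀ t : V, t ≠ N.s →
    (ω ≤ N.minCutNode t → dminT F N f {t} = N.minCutNode t - ω + 1) ∧
    (N.minCutNode t < ω → dminT F N f {t} = 1)

/-- LNEC dispersion MDS code. -/
def IsDispersionMDS (N : Network V E) (f : E → (Fin ω ⊕ E) → F) : Prop :=
  StronglySupRegular F N f ∧ ∀ T : Finset V, T.Nonempty → N.s ∉ T →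
    (ω ≤ N.minCutNodes T → dminT F N f T = N.minCutNodes T - ω + 1) ∧
    (N.minCutNodes T < ω → dminT F N f T = 1)

/-- LNEC generic MDS code. -/
def IsGenericMDS (N : Network V E) (f : E → (Fin ω ⊕ E) → F) : Prop :=
  ChannelRegular F N f ∧ ∀ ξ : Finset E, ξ.Nonempty →
    (ω ≤ N.minCutChans ξ → dminX F N f ξ = N.minCutChans ξ - ω + 1) ∧
    (N.minCutChans ξ < ω → dminX F N f ξ = 1)

/-- `R_t(δ_t)`: the set of error patterns `ρ` with `|ρ| = rank_t(ρ) = δ_t`. -/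
def Rset (N : Network V E) (ω : ℕ) (t : V) : Set (Finset E) :=
  {ρ | ρ.card = N.minCutNode t - ω ∧ rankT F N ω ({t} : Finset V) ρ = N.minCutNode t - ω}

end Codes

/-!
The dimension count gives (2) ⇒ (1). For (1) ⇒ (2), the kernels on `ξ'` lie in the span of
the kernels on any cut of `ξ'`, so the dimension is at most `min ω C_ξ'`. For the reverse
inequality, `ξ ↦ C_ξ` is the rank function of a matroid: it is monotone, grows by at most one per added
channel, and is submodular, because a minimum cut can be replaced by the boundary of the
region reachable while avoiding it, and boundary sizes of regions are submodular. Hence `ξ'`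
contains a set `ξ` with `|ξ| = C_ξ = min ω C_ξ'`, and (1) makes its kernels independent.
-/

namespace Network

variable {V E : Type*} (N : Network V E)

lemma pathFrom_singleton {e : E} {u : V} (h : N.tail e = u) : N.PathFrom [e] u :=
  ⟨⟨List.cons_ne_nil _ _, List.isChain_singleton _⟩, by simpa using h⟩

variable {N} in
lemma PathFrom.concat {p : List E} {u : V} {d e : E} (hp : N.PathFrom p u)
    (hd : p.getLast? = some d) (hde : N.head d = N.tail e) : N.PathFrom (p ++ [e]) u := by
  obtain ⟨⟨hne, hchain⟩, hhead⟩ := hp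
  refine ⟨⟨by simp, hchain.append (List.isChain_singleton _) ?_⟩, ?_⟩
  · intro x hx y hy
    simp_all
  · obtain ⟨a, t, rfl⟩ := List.exists_cons_of_ne_nil hne
    simpa using hhead

def FedBy (A : Finset E) (e : E) : Prop :=
  N.tail e = N.s ∨ ∃ d ∈ A, N.head d = N.tail e

lemma isCutChans_self (ξ : Finset E) : N.IsCutChans ξ ξ :=
  fun _ _ ⟨e, he, heξ⟩ => ⟨e, List.mem_of_getLast? he, heξ⟩

lemma exists_isCutChans_card_eq (ξ : Finset E) :
    ∃ C : Finset E, N.IsCutChans C ξ ∧ C.card = N.minCutChans ξ :=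
  Nat.sInf_mem (s := {n | ∃ C : Finset E, N.IsCutChans C ξ ∧ C.card = n})
    ⟨ξ.card, ξ, N.isCutChans_self ξ, rfl⟩

variable {N} in
lemma IsCutChans.minCutChans_le {C ξ : Finset E} (hC : N.IsCutChans C ξ) :
    N.minCutChans ξ ≤ C.card :=
  Nat.sInf_le ⟨C, hC, rfl⟩

lemma minCutChans_le_card (ξ : Finset E) : N.minCutChans ξ ≤ ξ.card :=
  (N.isCutChans_self ξ).minCutChans_le

lemma minCutChans_mono {ξ η : Finset E} (h : ξ ⊆ η) : N.minCutChans ξ ≤ N.minCutChans η := by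
  obtain ⟨C, hC, hcard⟩ := N.exists_isCutChans_card_eq η
  exact hcard ▸ IsCutChans.minCutChans_le fun p hp ⟨e, he, heξ⟩ => hC p hp ⟨e, he, h heξ⟩

def CutIndep (ξ : Finset E) : Prop :=
  N.minCutChans ξ = ξ.card

section DecidableEq

variable [DecidableEq E]

lemma fedBy_union {A B : Finset E} {e : E} : N.FedBy (A ∪ B) e ↔ N.FedBy A e ∨ N.FedBy B e := by
  simp only [FedBy, Finset.mem_union]
  grind

lemma FedBy.of_inter {A B : Finset E} {e : E} (h : N.FedBy (A ∩ B) e) :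
    N.FedBy A e ∧ N.FedBy B e := by
  simp only [FedBy, Finset.mem_inter] at h ⊢
  grind

lemma minCutChans_union_le (ξ S : Finset E) :
    N.minCutChans (ξ ∪ S) ≤ N.minCutChans ξ + S.card := by
  obtain ⟨C, hC, hcard⟩ := N.exists_isCutChans_card_eq ξ
  have hcut : N.IsCutChans (C ∪ S) (ξ ∪ S) := by
    rintro p hp ⟨e, he, heξS⟩
    rcases Finset.mem_union.mp heξS with heξ | heS
    · obtain ⟨d, hd, hdC⟩ := hC p hp ⟨e, he, heξ⟩
      exact ⟨d, hd, Finset.mem_union_left _ hdC⟩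
    · exact ⟨e, List.mem_of_getLast? he, Finset.mem_union_right _ heS⟩
  calc N.minCutChans (ξ ∪ S) ≤ (C ∪ S).card := hcut.minCutChans_le
    _ ≤ C.card + S.card := Finset.card_union_le _ _
    _ = N.minCutChans ξ + S.card := by rw [hcard]

variable {N} in
lemma CutIndep.subset {ξ η : Finset E} (hη : N.CutIndep η) (h : ξ ⊆ η) : N.CutIndep ξ := by
  have hle := N.minCutChans_union_le ξ (η \ ξ)
  rw [Finset.union_sdiff_of_subset h, hη] at hle
  have := Finset.card_sdiff_add_card_eq_card h
  have := N.minCutChans_le_card ξ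
  unfold CutIndep
  omega

end DecidableEq

variable [Fintype E]

open Classical in
noncomputable def reach (C : Finset E) : Finset E :=
  Finset.univ.filter fun e =>
    ∃ p : List E, N.PathFrom p N.s ∧ p.getLast? = some e ∧ ∀ d ∈ p, d ∉ C

open Classical in
noncomputable def bdry (A : Finset E) : Finset E :=
  Finset.univ.filter fun e => e ∉ A ∧ N.FedBy A e

variable {N}

lemma mem_reach {C : Finset E} {e : E} :
    e ∈ N.reach C ↔ ∃ p : List E, N.PathFrom p N.s ∧ p.getLast? = some e ∧ ∀ d ∈ p, d ∉ C := by
  simp [reach]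

lemma mem_bdry {A : Finset E} {e : E} : e ∈ N.bdry A ↔ e ∉ A ∧ N.FedBy A e := by
  simp [bdry]

lemma mem_reach_of_fedBy {C : Finset E} {e : E} (hfed : N.FedBy (N.reach C) e) (heC : e ∉ C) :
    e ∈ N.reach C := by
  rcases hfed with hs | ⟨d, hdR, hde⟩
  · exact mem_reach.mpr ⟨[e], N.pathFrom_singleton hs, rfl, by simpa using heC⟩
  · obtain ⟨p, hp, hlast, havoid⟩ := mem_reach.mp hdR
    refine mem_reach.mpr ⟨p ++ [e], hp.concat hlast hde, List.getLast?_concat, fun x hx => ?_⟩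
    rcases List.mem_append.mp hx with hx | hx
    · exact havoid x hx
    · simp_all

lemma bdry_reach_subset (C : Finset E) : N.bdry (N.reach C) ⊆ C := fun e he => by
  obtain ⟨heR, hfed⟩ := mem_bdry.mp he
  by_contra heC
  exact heR (mem_reach_of_fedBy hfed heC)

lemma IsCutChans.disjoint_reach {C ξ : Finset E} (hC : N.IsCutChans C ξ) :
    Disjoint (N.reach C) ξ := by
  refine Finset.disjoint_left.mpr fun e he heξ => ?_
  obtain ⟨p, hp, hlast, havoid⟩ := mem_reach.mp he
  obtain ⟨d, hd, hdC⟩ := hC p hp ⟨e, hlast, heξ⟩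
  exact havoid d hd hdC

lemma exists_mem_bdry_of_isChain {A : Finset E} :
    ∀ p : List E, p.IsChain (fun d e => N.head d = N.tail e) →
      (∀ e ∈ p.head?, N.FedBy A e) → (∃ e ∈ p.getLast?, e ∉ A) → ∃ e ∈ p, e ∈ N.bdry A
  | [], _, _, ⟨_, he, _⟩ => by simp at he
  | a :: rest, hchain, hfed, hlast => by
    by_cases haA : a ∈ A
    · cases rest with
      | nil => simp_all
      | cons b rest =>
        have hb : N.FedBy A b := Or.inr ⟨a, haA, (List.isChain_cons_cons.mp hchain).1⟩
        obtain ⟨e, he, heb⟩ := exists_mem_bdry_of_isChain (b :: rest) hchain.tail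
          (by simpa using hb) (by simpa [List.getLast?_cons_cons] using hlast)
        exact ⟨e, List.mem_cons_of_mem _ he, heb⟩
    · exact ⟨a, List.mem_cons_self, mem_bdry.mpr ⟨haA, hfed a rfl⟩⟩

lemma isCutChans_bdry {A ξ : Finset E} (h : Disjoint A ξ) : N.IsCutChans (N.bdry A) ξ := by
  rintro p ⟨⟨-, hchain⟩, hhead⟩ ⟨e, he, heξ⟩
  exact exists_mem_bdry_of_isChain p hchain (fun e he => Or.inl (hhead e he))
    ⟨e, he, Finset.disjoint_right.mp h heξ⟩

variable (N) in
lemma exists_disjoint_card_bdry_le (ξ : Finset E) :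
    ∃ A : Finset E, Disjoint A ξ ∧ (N.bdry A).card ≤ N.minCutChans ξ := by
  obtain ⟨C, hC, hcard⟩ := N.exists_isCutChans_card_eq ξ
  exact ⟨N.reach C, hC.disjoint_reach, hcard ▸ Finset.card_le_card (bdry_reach_subset C)⟩

section DecidableEq

variable [DecidableEq E]

lemma card_bdry_union_add_card_bdry_inter_le (A B : Finset E) :
    (N.bdry (A ∪ B)).card + (N.bdry (A ∩ B)).card ≤ (N.bdry A).card + (N.bdry B).card := by
  have hunion : N.bdry (A ∪ B) ∪ N.bdry (A ∩ B) ⊆ N.bdry A ∪ N.bdry B := by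
    intro e
    have := FedBy.of_inter (N := N) (A := A) (B := B) (e := e)
    simp only [Finset.mem_union, Finset.mem_inter, mem_bdry, fedBy_union]
    tauto
  have hinter : N.bdry (A ∪ B) ∩ N.bdry (A ∩ B) ⊆ N.bdry A ∩ N.bdry B := by
    intro e
    have := FedBy.of_inter (N := N) (A := A) (B := B) (e := e)
    simp only [Finset.mem_union, Finset.mem_inter, mem_bdry]
    tauto
  rw [← Finset.card_union_add_card_inter, ← Finset.card_union_add_card_inter (N.bdry A)]
  exact add_le_add (Finset.card_le_card hunion) (Finset.card_le_card hinter)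

variable (N)

lemma minCutChans_union_add_minCutChans_inter_le (ξ η : Finset E) :
    N.minCutChans (ξ ∪ η) + N.minCutChans (ξ ∩ η) ≤ N.minCutChans ξ + N.minCutChans η := by
  obtain ⟨A, hAξ, hA⟩ := N.exists_disjoint_card_bdry_le ξ
  obtain ⟨B, hBη, hB⟩ := N.exists_disjoint_card_bdry_le η
  have hinter : N.minCutChans (ξ ∪ η) ≤ (N.bdry (A ∩ B)).card :=
    (isCutChans_bdry (Finset.disjoint_union_right.mpr
      ⟨hAξ.mono_left Finset.inter_subset_left,
        hBη.mono_left Finset.inter_subset_right⟩)).minCutChans_le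
  have hunion : N.minCutChans (ξ ∩ η) ≤ (N.bdry (A ∪ B)).card :=
    (isCutChans_bdry (Finset.disjoint_union_left.mpr
      ⟨hAξ.mono_right Finset.inter_subset_left,
        hBη.mono_right Finset.inter_subset_right⟩)).minCutChans_le
  have := card_bdry_union_add_card_bdry_inter_le (N := N) A B
  omega

lemma exists_cutIndep_subset_minCutChans_eq (A : Finset E) :
    ∃ B ⊆ A, N.CutIndep B ∧ N.minCutChans A = B.card := by
  induction A using Finset.induction_on with
  | empty =>
    have h0 := Nat.le_zero.mp (N.minCutChans_le_card ∅)
    exact ⟨∅, subset_rfl, h0, h0⟩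
  | insert a A ha ih =>
    obtain ⟨B, hBA, hB, hAB⟩ := ih
    have haB : a ∉ B := fun h => ha (hBA h)
    have hlow := N.minCutChans_mono (Finset.subset_insert a B)
    have hup := N.minCutChans_union_le B {a}
    have hA := N.minCutChans_mono (Finset.subset_insert a A)
    have hA' := N.minCutChans_union_le A {a}
    rw [Finset.union_singleton, Finset.card_singleton] at hup hA'
    unfold CutIndep at hB
    by_cases hgrow : N.minCutChans (insert a B) = B.card + 1
    · refine ⟨insert a B, Finset.insert_subset_insert a hBA, ?_, ?_⟩
      · rw [CutIndep, Finset.card_insert_of_notMem haB, hgrow]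
      · have := N.minCutChans_mono (Finset.insert_subset_insert a hBA)
        rw [Finset.card_insert_of_notMem haB]
        omega
    · -- `a` is spanned by `B`, hence by `A`, by submodularity
      refine ⟨B, hBA.trans (Finset.subset_insert a A), hB, ?_⟩
      have hsubmod := N.minCutChans_union_add_minCutChans_inter_le A (insert a B)
      rw [Finset.union_insert, Finset.union_eq_left.mpr hBA, Finset.inter_insert_of_notMem ha,
        Finset.inter_eq_right.mpr hBA] at hsubmod
      omega

lemma exists_subset_cutIndep_card_eq (A : Finset E) {m : ℕ} (hm : m ≤ N.minCutChans A) :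
    ∃ ξ ⊆ A, N.CutIndep ξ ∧ ξ.card = m := by
  obtain ⟨B, hBA, hB, hAB⟩ := N.exists_cutIndep_subset_minCutChans_eq A
  obtain ⟨ξ, hξB, hξ⟩ := Finset.exists_subset_card_eq (hAB ▸ hm)
  exact ⟨ξ, hξB.trans hBA, hB.subset hξB, hξ⟩

end DecidableEq

end Network

namespace IsGlobalKernel

variable {V E F : Type*} [Fintype E] [DecidableEq V] [Field F] {N : Network V E} {ω : ℕ} {k : E → E → F}
  {ks : Fin ω → E → F} {f : E → Fin ω → F}

/-- Induction along the acyclic order: the channels feeding a channel outside `N.reach C`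
lie outside it as well, and none of them is a source channel. -/
lemma mem_span_of_notMem_reach (hf : IsGlobalKernel F N ω k ks f) (C : Finset E) {e : E}
    (he : e ∉ N.reach C) : f e ∈ Submodule.span F (f '' C) := by
  induction hn : N.rk e using Nat.strong_induction_on generalizing e with
  | _ n ih =>
  by_cases heC : e ∈ C
  · exact Submodule.subset_span ⟨e, heC, rfl⟩
  have hts : N.tail e ≠ N.s := fun hs => he (Network.mem_reach_of_fedBy (Or.inl hs) heC)
  rw [hf e]
  simp only [if_neg hts, zero_smul, Finset.sum_const_zero, add_zero]
  refine Submodule.sum_mem _ fun d _ => ?_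
  split_ifs with hde
  · refine Submodule.smul_mem _ _ (ih _ (hn ▸ N.acyclic d e hde) (fun hd => ?_) rfl)
    exact he (Network.mem_reach_of_fedBy (Or.inr ⟨d, hd, hde⟩) heC)
  · exact Submodule.zero_mem _

lemma finrank_span_image_le_minCutChans (hf : IsGlobalKernel F N ω k ks f) (ξ : Finset E) :
    Module.finrank F (Submodule.span F (f '' ξ)) ≤ N.minCutChans ξ := by
  obtain ⟨C, hC, hcard⟩ := N.exists_isCutChans_card_eq ξ
  have hspan : Submodule.span F (f '' ξ) ≤ Submodule.span F (f '' C) :=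
    Submodule.span_le.mpr <| Set.image_subset_iff.mpr fun e heξ =>
      hf.mem_span_of_notMem_reach C (Finset.disjoint_right.mp hC.disjoint_reach heξ)
  calc Module.finrank F (Submodule.span F (f '' ξ))
      ≤ Module.finrank F (Submodule.span F (f '' C)) := Submodule.finrank_mono hspan
    _ ≤ C.card := by
      rw [Set.image_eq_range]
      exact (finrank_range_le_card _).trans_eq (Fintype.card_coe C)
    _ = N.minCutChans ξ := hcard

end IsGlobalKernel

theorem statement0_general {V E : Type*} [Fintype E] [DecidableEq V] [DecidableEq E]
    (F : Type*) [Field F] (N : Network V E) (ω : ℕ)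
    (k : E → E → F) (ks : Fin ω → E → F) (f : E → Fin ω → F)
    (hf : IsGlobalKernel F N ω k ks f) :
    (∀ ξ : Finset E, ξ.Nonempty → ξ.card = min ω (N.minCutChans ξ) →
        LinearIndependent F (fun e : ξ => f e)) ↔
    (∀ ξ' : Finset E, ξ'.Nonempty →
        Module.finrank F (Submodule.span F (f '' (ξ' : Set E))) = min ω (N.minCutChans ξ')) := by
  have hrange (ξ : Finset E) : f '' ξ = Set.range fun e : ξ => f e := Set.image_eq_range f ξ
  constructor
  · intro hindep ξ' _
    refine le_antisymm (le_min ((Submodule.finrank_le _).trans_eq (Module.finrank_fin_fun F))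
      (hf.finrank_span_image_le_minCutChans ξ')) ?_
    obtain ⟨ξ, hξξ', hξ, hcard⟩ :=
      N.exists_subset_cutIndep_card_eq ξ' (min_le_right ω (N.minCutChans ξ'))
    rcases ξ.eq_empty_or_nonempty with rfl | hne
    · simp [← hcard]
    have hli := hindep ξ hne (by rw [hξ, hcard]; omega)
    calc min ω (N.minCutChans ξ') = ξ.card := hcard.symm
      _ = Module.finrank F (Submodule.span F (f '' (ξ : Set E))) := by
        rw [hrange, finrank_span_eq_card hli, Fintype.card_coe]
      _ ≤ Module.finrank F (Submodule.span F (f '' (ξ' : Set E))) :=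
        Submodule.finrank_mono (Submodule.span_mono (Set.image_mono hξξ'))
  · intro hdim ξ hne hcard
    rw [linearIndependent_iff_card_eq_finrank_span, Fintype.card_coe, Set.finrank,
      ← hrange, hdim ξ hne, hcard]

/-- For an `ω`-dimensional linear network code on a single-source
acyclic network, the following are equivalent: (1) for every nonempty collection
`ξ ⊆ E` with `|ξ| = min{ω, C_ξ}`, the global kernels `f_e`, `e ∈ ξ`, are linearly
independent; (2) for every nonempty collection `ξ' ⊆ E`,
`dim span{f_e : e ∈ ξ'} = min{ω, C_{ξ'}}`. -/
theorem statement0 {V E : Type*} [Fintype V] [Fintype E] [DecidableEq V] [DecidableEq E]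
    (F : Type*) [Field F] (N : Network V E) (ω : ℕ)
    (k : E → E → F) (ks : Fin ω → E → F) (f : E → Fin ω → F)
    (hf : IsGlobalKernel F N ω k ks f) :
    (∀ ξ : Finset E, ξ.Nonempty → ξ.card = min ω (N.minCutChans ξ) →
        LinearIndependent F (fun e : ξ => f e)) ↔
    (∀ ξ' : Finset E, ξ'.Nonempty →
        Module.finrank F (Submodule.span F (f '' (ξ' : Set E))) = min ω (N.minCutChans ξ')) :=
  statement0_general F N ω k ks f hf
end

section
/- Let G=(V,E) be a single-source acyclic network, T a collection of non-source nodes, and ρ={e_1,…,e_l}⊆E an error pattern with e_j∈In(i_j) for 1≤j≤l. Construct a modified network from G by introducing a new source node s_ρ, adding the l new channels e_j'=(s_ρ, i_j) for 1≤j≤l, and deleting the channels e_1,…,e_l. Then rank_T(ρ), the rank of the error pattern ρ with respect to T in the original network G, equals the minimum cut capacity between s_ρ and T in the modified network. -/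
/-!
Both sides are infima of cardinalities over the same family of channel sets: `ρ ≺_T C` holds
exactly when `C` is a cut between `s_ρ` and `T` in the modified network.

If `C` is such a cut, the inverse relation `(1 - K) M = 1` between the transfer matrix `K` of the
local coefficients and the matrix `M` of error coordinates of the kernels writes `row_T(d)`, for
`head d ∉ T`, as a combination of the rows of the successors of `d`. Descending induction along the
acyclic order then puts `row_T(d)` into `Δ(T, C)` for every channel `d` all of whose paths into `T`
in the modified network meet `C`, in particular for `d ∈ ρ`.

Conversely, if a path from `s_ρ` to `T` avoids `C`, take local coefficients `1` on consecutive
channels of the path and `0` elsewhere. The error part of the kernel of its last channel is then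
the indicator of the path's channels, so the row of its first channel (in `ρ`) is `1` at the last
channel, where every row of `C` vanishes.
-/

open scoped BigOperators

/-- The modified network of `N` for an error pattern `ρ`: a new source node `s_ρ` is
introduced, and every channel `e ∈ ρ` is replaced by the new channel
`e' = (s_ρ, head e)` (all other channels are unchanged). -/
def modNet {V E : Type*} (N : Network V E) (ρ : Finset E) [DecidableEq E] :
    Network (V ⊕ Unit) E where
  tail e := if e ∈ ρ then Sum.inr () else Sum.inl (N.tail e)
  head e := Sum.inl (N.head e)
  s := Sum.inr ()
  no_in_source e := by simp
  rk := N.rk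
  acyclic d e h := by
    by_cases he : e ∈ ρ
    · simp [he] at h
    · simp only [he, if_neg, if_false] at h
      exact N.acyclic d e (Sum.inl.inj h)

namespace Network

variable {V E : Type*}

lemma nodup_of_isChain (N : Network V E) {p : List E}
    (hp : p.IsChain fun d e => N.head d = N.tail e) : p.Nodup := by
  have hrk : (p.map N.rk).IsChain (· < ·) :=
    (List.isChain_map N.rk).2 (hp.imp fun d e h => N.acyclic d e h)
  exact List.Nodup.of_map N.rk ((List.isChain_iff_pairwise.mp hrk).imp Nat.ne_of_lt)

lemma wellFounded_succ [Fintype E] (N : Network V E) :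
    WellFounded fun e d : E => N.head d = N.tail e :=
  (measure fun e => Finset.univ.sup N.rk - N.rk e).wf.mono fun e d h => by
    have hde := N.acyclic d e h
    have he := Finset.le_sup (f := N.rk) (Finset.mem_univ e)
    change Finset.univ.sup N.rk - N.rk e < Finset.univ.sup N.rk - N.rk d
    omega

def IsCutFromChan (M : Network V E) (C : Finset E) (d : E) (T : Finset V) : Prop :=
  ∀ p : List E, (d :: p).IsChain (fun a b => M.head a = M.tail b) →
    (∃ e ∈ (d :: p).getLast?, M.head e ∈ T) → ∃ e ∈ d :: p, e ∈ C

lemma IsCutFromChan.head_notMem {M : Network V E} {C : Finset E} {d : E} {T : Finset V}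
    (hd : M.IsCutFromChan C d T) (hdC : d ∉ C) : M.head d ∉ T := fun hT => by
  simpa [hdC] using hd [] (List.isChain_singleton d) ⟨d, rfl, hT⟩

lemma IsCutFromChan.of_succ {M : Network V E} {C : Finset E} {d e : E} {T : Finset V}
    (hd : M.IsCutFromChan C d T) (hdC : d ∉ C) (hde : M.head d = M.tail e) :
    M.IsCutFromChan C e T := fun p hp hT => by
  obtain ⟨x, hx, hxC⟩ := hd (e :: p) (hp.cons_cons hde) (by simpa using hT)
  rcases List.mem_cons.mp hx with rfl | hx
  · exact absurd hxC hdC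
  · exact ⟨x, hx, hxC⟩

lemma IsCutNodes.isCutFromChan {M : Network V E} {C : Finset E} {T : Finset V}
    (hC : M.IsCutNodes C T) {d : E} (hd : M.tail d = M.s) : M.IsCutFromChan C d T :=
  fun p hp hT => hC (d :: p) ⟨⟨List.cons_ne_nil d p, hp⟩, by simpa using hd⟩ hT

end Network

section ModNet

variable {V E : Type*} [DecidableEq E] (N : Network V E) (ρ : Finset E)

lemma modNet_head_eq_tail_iff {d e : E} :
    (modNet N ρ).head d = (modNet N ρ).tail e ↔ N.head d = N.tail e ∧ e ∉ ρ := by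
  by_cases he : e ∈ ρ <;> simp [modNet, he]

lemma modNet_tail_eq_s_iff {e : E} : (modNet N ρ).tail e = (modNet N ρ).s ↔ e ∈ ρ := by
  by_cases he : e ∈ ρ <;> simp [modNet, he]

end ModNet

section PathCoeff

variable {E F : Type*} [Zero F] [One F] {p : List E} {i : ℕ}

open Classical in
noncomputable def pathCoeff (p : List E) (d e : E) : F :=
  if ∃ (i : ℕ) (_ : i + 1 < p.length), p[i] = d ∧ p[i + 1] = e then 1 else 0

lemma pathCoeff_getElem_zero (hp : p.Nodup) (h0 : 0 < p.length) (d : E) :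
    pathCoeff p d p[0] = (0 : F) := by
  rw [pathCoeff, if_neg]
  rintro ⟨j, hj, -, he⟩
  exact absurd (hp.getElem_inj_iff.1 he) (by omega)

lemma pathCoeff_getElem_succ [DecidableEq E] (hp : p.Nodup) (hi : i + 1 < p.length) (d : E) :
    pathCoeff p d p[i + 1] = if d = p[i] then (1 : F) else 0 := by
  by_cases hd : d = p[i]
  · rw [pathCoeff, if_pos ⟨i, hi, hd.symm, rfl⟩, if_pos hd]
  · rw [pathCoeff, if_neg, if_neg hd]
    rintro ⟨j, hj, rfl, he⟩
    have hji : j + 1 = i + 1 := hp.getElem_inj_iff.1 he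
    exact hd (by simp only [Nat.add_right_cancel hji])

end PathCoeff

section Codes

variable {V E : Type*} [DecidableEq V] [DecidableEq E] {F : Type*} [Field F]

def transferMatrix (N : Network V E) (k : E → E → F) : Matrix E E F :=
  Matrix.of fun d e => if N.head d = N.tail e then k d e else 0

/-- Entry `(d, e)` is the error coordinate `d` of `f̃_e`; restricted to the columns `In(T)`,
row `d` is `row_T(d)`. -/
def errorMatrix {ω : ℕ} (f : E → (Fin ω ⊕ E) → F) : Matrix E E F :=
  Matrix.of fun d e => f e (Sum.inr d)

lemma transferMatrix_pathCoeff_getElem_succ {N : Network V E} {p : List E} {i : ℕ}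
    (hp : p.IsChain fun d e => N.head d = N.tail e) (hi : i + 1 < p.length) (d : E) :
    transferMatrix N (pathCoeff p : E → E → F) d p[i + 1] = if d = p[i] then 1 else 0 := by
  rw [transferMatrix, Matrix.of_apply, pathCoeff_getElem_succ (N.nodup_of_isChain hp) hi]
  by_cases hd : d = p[i]
  · subst hd
    rw [if_pos (List.isChain_iff_getElem.1 hp i hi)]
  · simp [hd]

variable [Fintype E]

noncomputable def extKernelOf (N : Network V E) (ω : ℕ) (k : E → E → F) (ks : Fin ω → E → F) :
    E → (Fin ω ⊕ E) → F := fun e =>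
  (∑ d : E, if _ : N.head d = N.tail e then k d e • extKernelOf N ω k ks d else 0)
    + (∑ i : Fin ω, (if N.tail e = N.s then ks i e else 0) •
        (Pi.single (Sum.inl i) 1 : (Fin ω ⊕ E) → F))
    + (Pi.single (Sum.inr e) 1 : (Fin ω ⊕ E) → F)
termination_by e => N.rk e
decreasing_by exact N.acyclic _ _ ‹_›

lemma isExtKernel_extKernelOf (N : Network V E) (ω : ℕ) (k : E → E → F) (ks : Fin ω → E → F) :
    IsExtKernel F N ω k ks (extKernelOf N ω k ks) := fun e => by
  rw [extKernelOf]
  simp only [dite_eq_ite]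

variable {N : Network V E} {ω : ℕ} {k : E → E → F} {ks : Fin ω → E → F}
  {f : E → (Fin ω ⊕ E) → F} {p : List E}

lemma IsExtKernel.apply_inr (hf : IsExtKernel F N ω k ks f) (c x : E) :
    f c (Sum.inr x) = ∑ d, transferMatrix N k d c * f d (Sum.inr x) + if x = c then 1 else 0 := by
  rw [hf c]
  simp only [Pi.add_apply, Finset.sum_apply, ite_apply, Pi.smul_apply, Pi.zero_apply,
    Pi.single_apply, smul_eq_mul, reduceCtorEq, if_false, mul_zero, Finset.sum_const_zero,
    add_zero, Sum.inr.injEq, transferMatrix, Matrix.of_apply, ite_mul, zero_mul]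

lemma IsExtKernel.errorMatrix_mul_one_sub (hf : IsExtKernel F N ω k ks f) :
    errorMatrix f * (1 - transferMatrix N k) = 1 := by
  ext x c
  rw [Matrix.mul_sub, Matrix.mul_one, Matrix.sub_apply, Matrix.one_apply]
  simp only [errorMatrix, Matrix.mul_apply, Matrix.of_apply, hf.apply_inr c x, mul_comm]
  ring

/-- Reading `(1 - K) * errorMatrix f = 1` instead of `errorMatrix f * (1 - K) = 1` expands
`f̃_c` along the successors of `d` rather than the predecessors of `c`. -/
lemma IsExtKernel.apply_inr_eq_dual (hf : IsExtKernel F N ω k ks f) (c d : E) :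
    f c (Sum.inr d) = (if d = c then 1 else 0) + ∑ e, transferMatrix N k d e * f c (Sum.inr e) := by
  have hinv : (1 - transferMatrix N k) * errorMatrix f = 1 :=
    mul_eq_one_comm.mp hf.errorMatrix_mul_one_sub
  have h := congrFun (congrFun hinv d) c
  rw [Matrix.sub_mul, Matrix.one_mul, Matrix.sub_apply, Matrix.one_apply] at h
  simp only [errorMatrix, Matrix.mul_apply, Matrix.of_apply] at h
  linear_combination h

lemma IsExtKernel.rowT_inr (hf : IsExtKernel F N ω k ks f) {T : Finset V} {d : E}
    (hd : N.head d ∉ T) :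
    rowT F N f T (Sum.inr d) = ∑ e, transferMatrix N k d e • rowT F N f T (Sum.inr e) := by
  ext c
  simp only [rowT, Finset.sum_apply, Pi.smul_apply, smul_eq_mul]
  split_ifs with hc
  · rw [hf.apply_inr_eq_dual c d, if_neg (by rintro rfl; exact hd hc), zero_add]
  · simp

lemma IsExtKernel.rowT_mem_deltaT_of_isCutNodes (hf : IsExtKernel F N ω k ks f)
    {T : Finset V} {ρ C : Finset E} (hC : (modNet N ρ).IsCutNodes C (T.image Sum.inl)) (d : E)
    (hd : (modNet N ρ).IsCutFromChan C d (T.image Sum.inl)) :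
    rowT F N f T (Sum.inr d) ∈ DeltaT F N f T C := by
  induction d using N.wellFounded_succ.induction with
  | _ d ih =>
    by_cases hdC : d ∈ C
    · exact Submodule.subset_span ⟨d, hdC, rfl⟩
    have hdT : N.head d ∉ T := fun h =>
      hd.head_notMem hdC (Finset.mem_image_of_mem Sum.inl h)
    rw [hf.rowT_inr hdT]
    refine Submodule.sum_mem _ fun e _ => ?_
    by_cases hde : N.head d = N.tail e
    · refine Submodule.smul_mem _ _ (ih e hde ?_)
      by_cases he : e ∈ ρ
      · exact hC.isCutFromChan ((modNet_tail_eq_s_iff N ρ).2 he)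
      · exact hd.of_succ hdC ((modNet_head_eq_tail_iff N ρ).2 ⟨hde, he⟩)
    · simp [transferMatrix, hde]

lemma dominatesT_of_isCutNodes {T : Finset V} {ρ C : Finset E}
    (hC : (modNet N ρ).IsCutNodes C (T.image Sum.inl)) : DominatesT F N ω T ρ C :=
  fun _ _ _ hf => Submodule.span_le.mpr <| by
    rintro _ ⟨d, hd, rfl⟩
    exact hf.rowT_mem_deltaT_of_isCutNodes hC d
      (hC.isCutFromChan ((modNet_tail_eq_s_iff N ρ).2 hd))

lemma IsExtKernel.apply_inr_getElem_of_pathCoeff (hf : IsExtKernel F N ω (pathCoeff p) ks f)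
    (hp : p.IsChain fun d e => N.head d = N.tail e) (x : E) :
    ∀ i (hi : i < p.length), f p[i] (Sum.inr x) = ((p.take (i + 1)).count x : F)
  | 0, hi => by
    rw [hf.apply_inr, List.take_succ_eq_append_getElem hi, List.count_append,
      List.count_singleton]
    simp [transferMatrix, pathCoeff_getElem_zero (N.nodup_of_isChain hp) hi, eq_comm (a := x)]
  | i + 1, hi => by
    rw [hf.apply_inr, List.take_succ_eq_append_getElem hi, List.count_append, Nat.cast_add,
      ← hf.apply_inr_getElem_of_pathCoeff hp x i (by omega), List.count_singleton]
    simp [transferMatrix_pathCoeff_getElem_succ hp hi, eq_comm (a := x)]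

lemma IsExtKernel.apply_inr_of_mem_getLast? (hf : IsExtKernel F N ω (pathCoeff p) ks f)
    (hp : p.IsChain fun d e => N.head d = N.tail e) {c : E} (hc : c ∈ p.getLast?) (x : E) :
    f c (Sum.inr x) = (p.count x : F) := by
  rw [List.getLast?_eq_getElem?, Option.mem_def, List.getElem?_eq_some_iff] at hc
  obtain ⟨hlen, rfl⟩ := hc
  rw [hf.apply_inr_getElem_of_pathCoeff hp x _ hlen, List.take_of_length_le (by omega)]

lemma isCutNodes_of_dominatesT {T : Finset V} {ρ C : Finset E} (h : DominatesT F N ω T ρ C) :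
    (modNet N ρ).IsCutNodes C (T.image Sum.inl) := by
  rintro p ⟨⟨hne, hchain⟩, hstart⟩ ⟨c, hc, hcT⟩
  by_contra! hpC
  obtain ⟨a, q, rfl⟩ := List.exists_cons_of_ne_nil hne
  have haρ : a ∈ ρ := (modNet_tail_eq_s_iff N ρ).1 (hstart a rfl)
  have hp : (a :: q).IsChain fun d e => N.head d = N.tail e :=
    hchain.imp fun d e hde => ((modNet_head_eq_tail_iff N ρ).1 hde).1
  have hcT' : N.head c ∈ T := by simpa [modNet] using hcT
  obtain ⟨f, hf⟩ : ∃ f, IsExtKernel F N ω (pathCoeff (a :: q)) 0 f :=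
    ⟨_, isExtKernel_extKernelOf N ω _ _⟩
  have hval : ∀ x, rowT F N f T (Sum.inr x) c = ((a :: q).count x : F) := fun x => by
    rw [rowT, if_pos hcT', hf.apply_inr_of_mem_getLast? hp hc]
  have hker : DeltaT F N f T C ≤ LinearMap.ker (LinearMap.proj c) := Submodule.span_le.mpr <| by
    rintro _ ⟨x, hx, rfl⟩
    simp [hval, List.count_eq_zero_of_not_mem (fun h => hpC x h hx)]
  have hmem := hker (h _ _ f hf (Submodule.subset_span ⟨a, haρ, rfl⟩))
  simp [hval, List.count_eq_one_of_mem (N.nodup_of_isChain hp) List.mem_cons_self] at hmem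

lemma dominatesT_iff_isCutNodes {T : Finset V} {ρ C : Finset E} :
    DominatesT F N ω T ρ C ↔ (modNet N ρ).IsCutNodes C (T.image Sum.inl) :=
  ⟨isCutNodes_of_dominatesT, dominatesT_of_isCutNodes⟩

end Codes

theorem statement1_general {V E : Type*} [Fintype E] [DecidableEq V] [DecidableEq E]
    (F : Type*) [Field F] (N : Network V E) (ω : ℕ)
    (T : Finset V) (ρ : Finset E) :
    rankT F N ω T ρ = (modNet N ρ).minCutNodes (T.image Sum.inl) := by
  simp only [rankT, Network.minCutNodes, dominatesT_iff_isCutNodes]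

/-- The rank `rank_T(ρ)` of an error pattern `ρ` with respect to a
collection `T` of non-source nodes equals the minimum cut capacity between the new
source `s_ρ` and `T` in the modified network. -/
theorem statement1 {V E : Type*} [Fintype V] [Fintype E] [DecidableEq V] [DecidableEq E]
    (F : Type*) [Field F] [Fintype F] (N : Network V E) (ω : ℕ) (hω : 1 ≤ ω)
    (T : Finset V) (hT : T.Nonempty) (hTs : N.s ∉ T) (ρ : Finset E) :
    rankT F N ω T ρ = (modNet N ρ).minCutNodes (T.image Sum.inl) :=
  statement1_general F N ω T ρ
end

section
/- (Extended Singleton Bound) For any strongly sup-regular ω-dimensional linear network error correction code on a single-source acyclic network G=(V,E) and any nonempty collection T of non-source nodes, the minimum distance at T satisfies d_min^{(T)}(G) ≤ δ_T+1 if C_T ≥ ω, and d_min^{(T)}(G) ≤ 1 if C_T < ω. -/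
open scoped BigOperators

/-!
Let `C` be a minimum cut between the source and `T`. Every channel entering `T` is separated
from the source by `C`, so by induction along the acyclic order its extended kernel lies in
`span {f̃_c : c ∈ C}` plus vectors vanishing at the message coordinates and at `C`. The kernels
of `C` are unitriangular on the coordinates of `C`, so a combination of columns of `F̃_T` that
vanishes on the rows of `C` also vanishes on the message rows; by duality `Φ(T) ≤ Δ(T, C)`.
For `ρ ⊆ C` with `|C \ ρ| < dim Φ(T)`, counting dimensions in
`Φ(T) ≤ Δ(T, ρ) ⊔ Δ(T, C \ ρ)` gives `Δ(T, ρ) ⊓ Φ(T) ≠ 0`. Hence `d_min ≤ |C| - dim Φ(T) + 1`,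
and strong sup-regularity says `dim Φ(T) = min {ω, C_T}`.
-/

theorem Submodule.inf_ne_bot_of_le_sup_of_finrank_lt {K W : Type*} [DivisionRing K]
    [AddCommGroup W] [Module K W] [FiniteDimensional K W] {A B P : Submodule K W}
    (hP : P ≤ A ⊔ B) (hB : Module.finrank K B < Module.finrank K P) : A ⊓ P ≠ ⊥ := by
  intro hbot
  have hdim := Submodule.finrank_sup_add_finrank_inf_eq A P
  rw [hbot, finrank_bot] at hdim
  have hsup : Module.finrank K ↥(A ⊔ P) ≤ Module.finrank K ↥(A ⊔ B) :=
    Submodule.finrank_mono (sup_le le_sup_left hP)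
  have := Submodule.finrank_add_le_finrank_add_finrank A B
  omega

theorem Submodule.span_le_span_of_dual {K W : Type*} [Field K] [AddCommGroup W] [Module K W]
    {s t : Set W}
    (h : ∀ φ : Module.Dual K W, (∀ v ∈ t, φ v = 0) → ∀ v ∈ s, φ v = 0) :
    Submodule.span K s ≤ Submodule.span K t := by
  rw [← Subspace.dualAnnihilator_le_dualAnnihilator_iff, ← SetLike.coe_subset_coe,
    Submodule.coe_dualAnnihilator_span, Submodule.coe_dualAnnihilator_span]
  exact fun φ hφ v hv => h φ (fun u hu => hφ hu) v hv

def vanishingAt (F : Type*) [Field F] {ι : Type*} (s : Set ι) : Submodule F (ι → F) :=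
  Submodule.pi s fun _ => ⊥

theorem mem_vanishingAt {F ι : Type*} [Field F] {s : Set ι} {v : ι → F} :
    v ∈ vanishingAt F s ↔ ∀ i ∈ s, v i = 0 := by
  simp only [vanishingAt, Submodule.mem_pi, Submodule.mem_bot]

namespace Network

variable {V E : Type*} (N : Network V E)

theorem exists_isCutNodes_card_eq_minCutNodes [Fintype E] (T : Finset V) :
    ∃ C : Finset E, N.IsCutNodes C T ∧ C.card = N.minCutNodes T := by
  have hcut : N.IsCutNodes Finset.univ T := fun _ hp _ =>
    ⟨_, List.head_mem hp.1.1, Finset.mem_univ _⟩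
  exact Nat.sInf_mem (s := {n | ∃ C : Finset E, N.IsCutNodes C T ∧ C.card = n})
    ⟨_, _, hcut, rfl⟩

def IsSeparatedBy (C : Finset E) (e : E) : Prop :=
  ∀ p : List E, N.PathFrom p N.s → p.getLast? = some e → ∃ a ∈ p, a ∈ C

variable {N} {C : Finset E} {e : E}

theorem IsSeparatedBy.tail_ne_source (hsep : N.IsSeparatedBy C e) (heC : e ∉ C) :
    N.tail e ≠ N.s := by
  intro hts
  obtain ⟨a, ha, haC⟩ :=
    hsep [e] ⟨⟨List.cons_ne_nil _ _, List.isChain_singleton _⟩, by simpa⟩ rfl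
  rw [List.mem_singleton.mp ha] at haC
  exact heC haC

theorem IsSeparatedBy.of_head_eq_tail {d : E} (hsep : N.IsSeparatedBy C e) (heC : e ∉ C)
    (hde : N.head d = N.tail e) : N.IsSeparatedBy C d := by
  intro p hp hlast
  have hpe : N.PathFrom (p ++ [e]) N.s := by
    refine ⟨⟨by simp, ?_⟩, fun a ha => hp.2 a ?_⟩
    · rw [List.Chain', List.isChain_append]
      refine ⟨hp.1.2, List.isChain_singleton _, fun x hx y hy => ?_⟩
      rw [hlast, Option.mem_some_iff] at hx
      rw [List.head?_cons, Option.mem_some_iff] at hy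
      rwa [← hx, ← hy]
    · rwa [List.head?_append_of_ne_nil _ hp.1.1] at ha
  obtain ⟨a, ha, haC⟩ := hsep (p ++ [e]) hpe (by simp)
  rcases List.mem_append.mp ha with ha | ha
  · exact ⟨a, ha, haC⟩
  · rw [List.mem_singleton.mp ha] at haC
    exact absurd haC heC

end Network

namespace IsExtKernel

variable {V E F : Type*} [Fintype E] [DecidableEq V] [DecidableEq E] [Field F] {ω : ℕ}
  {N : Network V E} {k : E → E → F} {ks : Fin ω → E → F} {f : E → (Fin ω ⊕ E) → F}
  {C : Finset E}

theorem apply_inr_s2 (hf : IsExtKernel F N ω k ks f) (e c : E) :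
    f e (Sum.inr c) =
      (∑ d, if N.head d = N.tail e then k d e * f d (Sum.inr c) else 0) +
        if c = e then 1 else 0 := by
  conv_lhs => rw [hf e]
  simp only [Pi.add_apply, Finset.sum_apply, Pi.smul_apply, smul_eq_mul, Pi.single_apply,
    Sum.inr.injEq, reduceCtorEq, if_false, mul_zero, Finset.sum_const_zero, add_zero]
  congr 2 with d
  split_ifs <;> rfl

theorem apply_inr_eq_zero_of_rk_le (hf : IsExtKernel F N ω k ks f) {d e : E} (hne : e ≠ d)
    (hrk : N.rk d ≤ N.rk e) : f d (Sum.inr e) = 0 := by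
  induction hn : N.rk d using Nat.strong_induction_on generalizing d with
  | _ n ih =>
    rw [hf.apply_inr_s2, if_neg hne, add_zero]
    refine Finset.sum_eq_zero fun d' _ => ?_
    split_ifs with h
    · have hlt := N.acyclic d' d h
      rw [ih _ (hn ▸ hlt) (by rintro rfl; omega) (by omega) rfl, mul_zero]
    · rfl

theorem apply_inr_self (hf : IsExtKernel F N ω k ks f) (e : E) : f e (Sum.inr e) = 1 := by
  rw [hf.apply_inr_s2, if_pos rfl, Finset.sum_eq_zero, zero_add]
  intro d _
  split_ifs with h
  · have hlt := N.acyclic d e h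
    rw [hf.apply_inr_eq_zero_of_rk_le (by rintro rfl; omega) hlt.le, mul_zero]
  · rfl

theorem eq_zero_of_mem_span_of_apply_inr_eq_zero (hf : IsExtKernel F N ω k ks f)
    {a : (Fin ω ⊕ E) → F} (ha : a ∈ Submodule.span F (f '' C))
    (hC : ∀ c ∈ C, a (Sum.inr c) = 0) : a = 0 := by
  obtain ⟨l, hlC, rfl⟩ := (Finsupp.mem_span_image_iff_linearCombination F).mp ha
  suffices l = 0 by rw [this, map_zero]
  by_contra hl
  -- only the channel of maximal rank in the support contributes to its own coordinate
  obtain ⟨c, hc, hmax⟩ :=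
    l.support.exists_max_image N.rk (Finsupp.support_nonempty_iff.mpr hl)
  have hcoord : Finsupp.linearCombination F f l (Sum.inr c) = l c := by
    rw [Finsupp.linearCombination_apply, Finsupp.sum, Finset.sum_apply,
      Finset.sum_eq_single c, Pi.smul_apply, hf.apply_inr_self, smul_eq_mul, mul_one]
    · intro d hd hdc
      rw [Pi.smul_apply, hf.apply_inr_eq_zero_of_rk_le (Ne.symm hdc) (hmax d hd), smul_zero]
    · intro hc'
      exact absurd hc hc'
  exact Finsupp.mem_support_iff.mp hc (hcoord ▸ hC c (hlC hc))

theorem mem_span_image_sup_vanishingAt (hf : IsExtKernel F N ω k ks f) {e : E}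
    (hsep : N.IsSeparatedBy C e) :
    f e ∈ Submodule.span F (f '' C) ⊔ vanishingAt F (Set.range Sum.inl ∪ Sum.inr '' C) := by
  induction hn : N.rk e using Nat.strong_induction_on generalizing e with
  | _ n ih =>
    by_cases heC : e ∈ C
    · exact Submodule.mem_sup_left (Submodule.subset_span ⟨e, heC, rfl⟩)
    rw [hf e]
    refine add_mem (add_mem (Submodule.sum_mem _ fun d _ => ?_)
      (Submodule.sum_mem _ fun i _ => ?_)) (Submodule.mem_sup_right (mem_vanishingAt.mpr ?_))
    · split_ifs with h
      · have hlt := N.acyclic d e h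
        exact Submodule.smul_mem _ _ (ih _ (hn ▸ hlt) (hsep.of_head_eq_tail heC h) rfl)
      · exact zero_mem _
    · rw [if_neg (hsep.tail_ne_source heC), zero_smul]
      exact zero_mem _
    · rintro _ (⟨i, rfl⟩ | ⟨c, hc, rfl⟩)
      · exact Pi.single_eq_of_ne Sum.inl_ne_inr _
      · exact Pi.single_eq_of_ne (fun h => heC (by rwa [← Sum.inr_injective h])) _

theorem apply_inl_eq_zero (hf : IsExtKernel F N ω k ks f) {w : (Fin ω ⊕ E) → F}
    (hw : w ∈ Submodule.span F (f '' C) ⊔ vanishingAt F (Set.range Sum.inl ∪ Sum.inr '' C))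
    (hwC : ∀ c ∈ C, w (Sum.inr c) = 0) (i : Fin ω) : w (Sum.inl i) = 0 := by
  obtain ⟨a, ha, b, hb, rfl⟩ := Submodule.mem_sup.mp hw
  have hb0 := mem_vanishingAt.mp hb
  have ha0 : a = 0 := hf.eq_zero_of_mem_span_of_apply_inr_eq_zero ha fun c hc => by
    simpa [hb0 _ (Or.inr ⟨c, hc, rfl⟩)] using hwC c hc
  simpa [ha0] using hb0 _ (Or.inl ⟨i, rfl⟩)

theorem phiT_le_deltaT (hf : IsExtKernel F N ω k ks f) {T : Finset V}
    (hC : N.IsCutNodes C T) : PhiT F N f T ≤ DeltaT F N f T C := by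
  refine Submodule.span_le_span_of_dual fun φ hφ _ ⟨i, hi⟩ => hi ▸ ?_
  -- by duality, `φ` becomes the combination `w` of the kernels of the channels entering `T`
  set w := ∑ e, if N.head e ∈ T then φ (fun e' => if e = e' then 1 else 0) • f e else 0
    with hw
  have hφw : ∀ d, φ (rowT F N f T d) = w d := fun d => by
    rw [LinearMap.pi_apply_eq_sum_univ, hw, Finset.sum_apply]
    refine Finset.sum_congr rfl fun e _ => ?_
    unfold rowT
    split_ifs <;> simp [mul_comm]
  rw [hφw]
  refine hf.apply_inl_eq_zero (C := C) (Submodule.sum_mem _ fun e _ => ?_) (fun c hc => ?_) i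
  · split_ifs with hT
    · exact Submodule.smul_mem _ _
        (hf.mem_span_image_sup_vanishingAt fun p hp hlast => hC p hp ⟨e, hlast, hT⟩)
    · exact zero_mem _
  · exact (hφw _).symm.trans (hφ _ ⟨c, hc, rfl⟩)

end IsExtKernel

section Distance

variable {V E F : Type*} [DecidableEq V] [Field F] {ω : ℕ} {N : Network V E}
  {f : E → (Fin ω ⊕ E) → F} {T : Finset V}

theorem deltaT_union [DecidableEq E] (ρ σ : Finset E) :
    DeltaT F N f T (ρ ∪ σ) = DeltaT F N f T ρ ⊔ DeltaT F N f T σ := by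
  simp only [DeltaT, Finset.coe_union, Set.image_union, Submodule.span_union]

theorem finrank_deltaT_le_card (ρ : Finset E) :
    Module.finrank F (DeltaT F N f T ρ) ≤ ρ.card := by
  classical
  rw [DeltaT, ← Finset.coe_image]
  exact (finrank_span_finset_le_card _).trans Finset.card_image_le

theorem deltaT_inf_phiT_ne_bot [Fintype E] [DecidableEq E] {C ρ : Finset E}
    (hΦ : PhiT F N f T ≤ DeltaT F N f T C) (hρ : ρ ⊆ C)
    (hcard : C.card - ρ.card < Module.finrank F (PhiT F N f T)) :
    DeltaT F N f T ρ ⊓ PhiT F N f T ≠ ⊥ := by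
  refine Submodule.inf_ne_bot_of_le_sup_of_finrank_lt (B := DeltaT F N f T (C \ ρ)) ?_ ?_
  · rwa [← deltaT_union, Finset.union_sdiff_of_subset hρ]
  · exact (finrank_deltaT_le_card _).trans_lt (by rwa [Finset.card_sdiff_of_subset hρ])

theorem dminT_le_card {ρ : Finset E} (h : DeltaT F N f T ρ ⊓ PhiT F N f T ≠ ⊥) :
    dminT F N f T ≤ ρ.card :=
  Nat.sInf_le ⟨ρ, rfl, h⟩

-- no error pattern is detected by `Φ(T) = 0`, and `sInf ∅ = 0`
theorem dminT_eq_zero_of_phiT_eq_bot (h : PhiT F N f T = ⊥) : dminT F N f T = 0 := by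
  rw [dminT, h]
  simp

theorem IsExtKernel.dminT_le_card_sub_finrank_add_one [Fintype E] [DecidableEq E]
    {k : E → E → F} {ks : Fin ω → E → F} (hf : IsExtKernel F N ω k ks f) {C : Finset E}
    (hC : N.IsCutNodes C T) :
    dminT F N f T ≤ C.card - Module.finrank F (PhiT F N f T) + 1 := by
  have hΦ := hf.phiT_le_deltaT hC
  rcases Nat.eq_zero_or_pos (Module.finrank F (PhiT F N f T)) with h0 | hpos
  · rw [dminT_eq_zero_of_phiT_eq_bot (Submodule.finrank_eq_zero.mp h0)]
    exact Nat.zero_le _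
  have hle : Module.finrank F (PhiT F N f T) ≤ C.card :=
    (Submodule.finrank_mono hΦ).trans (finrank_deltaT_le_card C)
  obtain ⟨ρ, hρC, hρ⟩ :=
    Finset.exists_subset_card_eq (s := C) (n := C.card - Module.finrank F (PhiT F N f T) + 1)
      (by omega)
  exact hρ ▸ dminT_le_card (deltaT_inf_phiT_ne_bot hΦ hρC (by omega))

end Distance

theorem statement2_general {V E : Type*} [Fintype E] [DecidableEq V] [DecidableEq E]
    (F : Type*) [Field F] (N : Network V E) (ω : ℕ)
    (k : E → E → F) (ks : Fin ω → E → F) (f : E → (Fin ω ⊕ E) → F)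
    (hf : IsExtKernel F N ω k ks f) (hreg : StronglySupRegular F N f)
    (T : Finset V) (hT : T.Nonempty) (hTs : N.s ∉ T) :
    (ω ≤ N.minCutNodes T → dminT F N f T ≤ N.minCutNodes T - ω + 1) ∧
    (N.minCutNodes T < ω → dminT F N f T ≤ 1) := by
  obtain ⟨C, hC, hCcard⟩ := N.exists_isCutNodes_card_eq_minCutNodes T
  have hbound := hf.dminT_le_card_sub_finrank_add_one hC
  rw [hreg T hT hTs, hCcard] at hbound
  constructor <;> intro <;> omega

/-- **Extended Singleton Bound.** For any strongly sup-regular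
`ω`-dimensional LNEC code and any nonempty collection `T` of non-source nodes,
`d_min^{(T)} ≤ δ_T + 1` if `C_T ≥ ω`, and `d_min^{(T)} ≤ 1` if `C_T < ω`. -/
theorem statement2 {V E : Type*} [Fintype V] [Fintype E] [DecidableEq V] [DecidableEq E]
    (F : Type*) [Field F] [Fintype F] (N : Network V E) (ω : ℕ) (hω : 1 ≤ ω)
    (k : E → E → F) (ks : Fin ω → E → F) (f : E → (Fin ω ⊕ E) → F)
    (hf : IsExtKernel F N ω k ks f) (hreg : StronglySupRegular F N f)
    (T : Finset V) (hT : T.Nonempty) (hTs : N.s ∉ T) :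
    (ω ≤ N.minCutNodes T → dminT F N f T ≤ N.minCutNodes T - ω + 1) ∧
    (N.minCutNodes T < ω → dminT F N f T ≤ 1) :=
  statement2_general F N ω k ks f hf hreg T hT hTs
end

section
/- For any strongly sup-regular ω-dimensional linear network error correction code on a single-source acyclic network G=(V,E) and any nonempty collection T of non-source nodes, the following three quantities coincide: min{rank_T(ρ) : ρ⊆E with Δ(T,ρ)∩Φ(T)≠{0}} = min{|ρ| : ρ⊆E with Δ(T,ρ)∩Φ(T)≠{0}} = min{dim Δ(T,ρ) : ρ⊆E with Δ(T,ρ)∩Φ(T)≠{0}}. -/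
open scoped BigOperators

private lemma nat_sInf_eq_of {A B : Set ℕ}
    (h1 : ∀ b ∈ B, ∃ a ∈ A, a ≤ b) (h2 : ∀ a ∈ A, ∃ b ∈ B, b ≤ a) :
    sInf A = sInf B := by
  rcases B.eq_empty_or_nonempty with hB | hB
  · have hA : A = ∅ := Set.eq_empty_iff_forall_notMem.2 fun a ha => by
      obtain ⟨b, hb, _⟩ := h2 a ha
      simp [hB] at hb
    rw [hA, hB]
  · have hA : A.Nonempty := by
      obtain ⟨b, hb⟩ := hB; obtain ⟨a, ha, _⟩ := h1 b hb; exact ⟨a, ha⟩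
    apply le_antisymm
    · obtain ⟨a, ha, hle⟩ := h1 _ (Nat.sInf_mem hB)
      exact (Nat.sInf_le ha).trans hle
    · obtain ⟨b, hb, hle⟩ := h2 _ (Nat.sInf_mem hA)
      exact (Nat.sInf_le hb).trans hle

private lemma exists_subset_span_eq (F : Type*) [Field F] {M ι : Type*} [AddCommGroup M]
    [Module F M] [DecidableEq ι] (g : ι → M) (ρ : Finset ι) :
    ∃ ρ' : Finset ι, ρ' ⊆ ρ ∧
      Submodule.span F (g '' (ρ' : Set ι)) = Submodule.span F (g '' (ρ : Set ι)) ∧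
      ρ'.card ≤ Module.finrank F (Submodule.span F (g '' (ρ : Set ι))) := by
  induction ρ using Finset.strongInduction with
  | _ ρ ih =>
    by_cases h : LinearIndependent F (fun e : (ρ : Set ι) => g e)
    · refine ⟨ρ, subset_rfl, rfl, ?_⟩
      have h1 : Module.finrank F (Submodule.span F (g '' (ρ : Set ι))) = ρ.card := by
        rw [Set.image_eq_range, finrank_span_eq_card h]
        simp
      exact h1.ge
    · obtain ⟨c, hsum, i₀, hi₀⟩ := Fintype.not_linearIndependent_iff.1 h
      have hi₀ρ : (i₀ : ι) ∈ ρ := i₀.2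
      have hmem : g (i₀ : ι) ∈ Submodule.span F (g '' ((ρ.erase (i₀ : ι)) : Set ι)) := by
        have hrest : ∑ i ∈ Finset.univ.erase i₀, c i • g (i : ι) = - (c i₀ • g (i₀ : ι)) := by
          rw [eq_neg_iff_add_eq_zero, Finset.sum_erase_add _ _ (Finset.mem_univ i₀)]
          exact hsum
        have hgi : g (i₀ : ι) = (-(c i₀)⁻¹) • ∑ i ∈ Finset.univ.erase i₀, c i • g (i : ι) := by
          rw [hrest, smul_neg, neg_smul, neg_neg, smul_smul, inv_mul_cancel₀ hi₀, one_smul]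
        rw [hgi]
        refine Submodule.smul_mem _ _ (Submodule.sum_mem _ fun i hi => Submodule.smul_mem _ _ ?_)
        refine Submodule.subset_span ⟨(i : ι), ?_, rfl⟩
        have hne : (i : ι) ≠ (i₀ : ι) :=
          Subtype.coe_injective.ne (Finset.ne_of_mem_erase hi)
        exact Finset.mem_coe.2 (Finset.mem_erase.2 ⟨hne, i.2⟩)
      have hspan2 : Submodule.span F (g '' ((ρ.erase (i₀ : ι)) : Set ι))
          = Submodule.span F (g '' (ρ : Set ι)) := by
        have hins : (ρ : Set ι) = insert (i₀ : ι) ((ρ.erase (i₀ : ι) : Finset ι) : Set ι) := by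
          rw [Finset.coe_erase, Set.insert_diff_singleton,
            Set.insert_eq_self.2 (Finset.mem_coe.2 hi₀ρ)]
        conv_rhs => rw [hins]
        rw [Set.image_insert_eq, Submodule.span_insert_eq_span hmem]
      obtain ⟨ρ', hsub, hspan, hcard⟩ := ih (ρ.erase (i₀ : ι)) (Finset.erase_ssubset hi₀ρ)
      exact ⟨ρ', hsub.trans (Finset.erase_subset _ _), hspan.trans hspan2,
        hcard.trans_eq (by rw [hspan2])⟩

/-- For any strongly sup-regular `ω`-dimensional LNEC code and any
nonempty collection `T` of non-source nodes, the three quantities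
`min{rank_T(ρ)}`, `min{|ρ|}`, `min{dim Δ(T,ρ)}`, each minimum taken over all error
patterns `ρ ⊆ E` with `Δ(T,ρ) ∩ Φ(T) ≠ {0}`, coincide. -/
theorem statement13 {V E : Type*} [Fintype V] [Fintype E] [DecidableEq V] [DecidableEq E]
    (F : Type*) [Field F] [Fintype F] (N : Network V E) (ω : ℕ) (hω : 1 ≤ ω)
    (k : E → E → F) (ks : Fin ω → E → F) (f : E → (Fin ω ⊕ E) → F)
    (hf : IsExtKernel F N ω k ks f) (hreg : StronglySupRegular F N f)
    (T : Finset V) (hT : T.Nonempty) (hTs : N.s ∉ T) :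
    sInf {n | ∃ ρ : Finset E,
        DeltaT F N f T ρ ⊓ PhiT F N f T ≠ ⊥ ∧ rankT F N ω T ρ = n}
      = sInf {n | ∃ ρ : Finset E,
        DeltaT F N f T ρ ⊓ PhiT F N f T ≠ ⊥ ∧ ρ.card = n} ∧
    sInf {n | ∃ ρ : Finset E,
        DeltaT F N f T ρ ⊓ PhiT F N f T ≠ ⊥ ∧ ρ.card = n}
      = sInf {n | ∃ ρ : Finset E,
        DeltaT F N f T ρ ⊓ PhiT F N f T ≠ ⊥ ∧
          Module.finrank F (DeltaT F N f T ρ) = n} := by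
  classical
  set g : E → (E → F) := fun e => rowT F N f T (Sum.inr e) with hg
  have hDelta : ∀ ρ : Finset E, DeltaT F N f T ρ = Submodule.span F (g '' (ρ : Set E)) :=
    fun ρ => rfl
  constructor
  · apply nat_sInf_eq_of
    · rintro n ⟨ρ, hρ, rfl⟩
      refine ⟨rankT F N ω T ρ, ⟨ρ, hρ, rfl⟩, ?_⟩
      exact Nat.sInf_le ⟨ρ, fun _ _ _ _ => le_rfl, rfl⟩
    · rintro n ⟨ρ, hρ, rfl⟩
      have hne : {m | ∃ ρ' : Finset E, DominatesT F N ω T ρ ρ' ∧ ρ'.card = m}.Nonempty :=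
        ⟨ρ.card, ρ, fun _ _ _ _ => le_rfl, rfl⟩
      obtain ⟨ρ', hdom, hcard⟩ := Nat.sInf_mem hne
      have hle : DeltaT F N f T ρ ⊓ PhiT F N f T ≤ DeltaT F N f T ρ' ⊓ PhiT F N f T :=
        inf_le_inf_right _ (hdom k ks f hf)
      refine ⟨ρ'.card, ⟨ρ', ?_, rfl⟩, hcard.le⟩
      intro hbot
      exact hρ (le_bot_iff.1 (hbot ▸ hle))
  · apply nat_sInf_eq_of
    · rintro n ⟨ρ, hρ, rfl⟩
      obtain ⟨ρ', hsub, hspan, hcard⟩ := exists_subset_span_eq F g ρ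
      have heq : DeltaT F N f T ρ' = DeltaT F N f T ρ := by rw [hDelta, hDelta, hspan]
      exact ⟨ρ'.card, ⟨ρ', by rw [heq]; exact hρ, rfl⟩, hcard⟩
    · rintro n ⟨ρ, hρ, rfl⟩
      refine ⟨Module.finrank F (DeltaT F N f T ρ), ⟨ρ, hρ, rfl⟩, ?_⟩
      calc Module.finrank F (DeltaT F N f T ρ)
          = Module.finrank F (Submodule.span F ((ρ.image g : Finset (E → F)) : Set (E → F))) := by
            rw [hDelta, Finset.coe_image]
        _ ≤ (ρ.image g).card := finrank_span_finset_le_card _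
        _ ≤ ρ.card := Finset.card_image_le
end

section
/- Let F be a field, let N be an invertible n×n matrix over F, let X be an m×n matrix over F, and let Y be an n×m matrix over F. Then the (m+n)×(n+m) block matrix [[X, 0_{m×m}],[N, Y]] satisfies det([[X, 0],[N, Y]]) = (−1)^{m(n+1)} · det(N) · det(X·N^{−1}·Y). -/
/-!
Listing the last `m` columns first turns the matrix into `[[0, X], [Y, N]]`; this column
permutation is the rotation of `Fin (m + n)` by `m`, of sign `(-1)^(m n)`. The Schur complement
of `N` in `[[0, X], [Y, N]]` is `-X N⁻¹ Y`, which contributes the remaining `(-1)^m`.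
-/

open Matrix Equiv

theorem val_finRotate_pow_apply {k : ℕ} (m : ℕ) (i : Fin k) :
    ((finRotate k ^ m) i : ℕ) = (i + m) % k := by
  induction m with
  | zero => simp [Nat.mod_eq_of_lt i.isLt]
  | succ m ih =>
    have := i.neZero
    rw [pow_succ', Perm.mul_apply, finRotate_apply, Fin.val_add, ih, Fin.val_one',
      ← Nat.add_mod, add_assoc]

theorem finCongr_trans_finAddFlip (m n : ℕ) :
    (finCongr (Nat.add_comm m n)).trans finAddFlip = finRotate (m + n) ^ m := by
  ext ⟨j, hj⟩
  rw [val_finRotate_pow_apply]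
  rcases lt_or_ge j n with h | h
  · simp only [trans_apply, finCongr_apply_mk, finAddFlip_apply_mk_left h]
    rw [Nat.mod_eq_of_lt (by omega), add_comm]
  · simp only [trans_apply, finCongr_apply_mk, finAddFlip_apply_mk_right h]
    rw [Nat.mod_eq_sub_mod (by omega), Nat.mod_eq_of_lt (by omega)]
    omega

theorem sign_finCongr_trans_finAddFlip (m n : ℕ) :
    Perm.sign ((finCongr (Nat.add_comm m n)).trans finAddFlip) = (-1) ^ (m * n) := by
  rw [finCongr_trans_finAddFlip, map_pow, sign_finRotate, ← pow_mul]
  obtain _ | k := m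
  · simp
  rw [show (k + 1 + n - 1) * (k + 1) = k * (k + 1) + (k + 1) * n by
      rw [Nat.add_right_comm, Nat.add_sub_cancel]; ring,
    pow_add, (Nat.even_mul_succ_self k).neg_one_pow, one_mul]

theorem det_fromBlocks_zero₁₁ {R m n : Type*} [CommRing R] [Fintype m] [DecidableEq m]
    [Fintype n] [DecidableEq n] (B : Matrix m n R) (C : Matrix n m R) (D : Matrix n n R)
    (hD : IsUnit D.det) :
    (fromBlocks 0 B C D).det = (-1) ^ Fintype.card m * D.det * (B * D⁻¹ * C).det := by
  have := D.invertibleOfIsUnitDet hD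
  rw [det_fromBlocks₂₂, invOf_eq_nonsing_inv, zero_sub, det_neg]
  ring

theorem det_submatrix_finSumFinEquiv_symm_cast {R : Type*} [CommRing R] {m n : ℕ}
    (A : Matrix (Fin m ⊕ Fin n) (Fin n ⊕ Fin m) R) :
    (A.submatrix finSumFinEquiv.symm
        (fun j => finSumFinEquiv.symm (Fin.cast (Nat.add_comm m n) j))).det
      = (-1) ^ (m * n) * (A.submatrix id Sum.swap).det := by
  have hcols : A.submatrix finSumFinEquiv.symm
        (fun j => finSumFinEquiv.symm (Fin.cast (Nat.add_comm m n) j))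
      = ((A.submatrix id Sum.swap).submatrix finSumFinEquiv.symm
          finSumFinEquiv.symm).submatrix id ((finCongr (Nat.add_comm m n)).trans finAddFlip) := by
    ext i j
    simp [finAddFlip]
  rw [hcols, det_permute', sign_finCongr_trans_finAddFlip, det_submatrix_equiv_self]
  simp

/-- For an invertible `n×n` matrix `N`, an `m×n` matrix `X` and an
`n×m` matrix `Y` over a field `F`, the `(m+n)×(n+m)` block matrix `[[X, 0],[N, Y]]`
(viewed as a square matrix of size `m+n`) satisfies
`det [[X, 0],[N, Y]] = (−1)^{m(n+1)} · det N · det (X · N⁻¹ · Y)`. -/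
theorem statement14 (F : Type*) [Field F] (m n : ℕ)
    (N : Matrix (Fin n) (Fin n) F) (X : Matrix (Fin m) (Fin n) F)
    (Y : Matrix (Fin n) (Fin m) F) (hN : IsUnit N.det) :
    ((Matrix.fromBlocks X (0 : Matrix (Fin m) (Fin m) F) N Y).submatrix
        (finSumFinEquiv (m := m) (n := n)).symm
        (fun j : Fin (m + n) =>
          (finSumFinEquiv (m := n) (n := m)).symm (Fin.cast (Nat.add_comm m n) j))).det
      = (-1 : F) ^ (m * (n + 1)) * N.det * (X * N⁻¹ * Y).det := by
  rw [det_submatrix_finSumFinEquiv_symm_cast, fromBlocks_submatrix_sum_swap_right, submatrix_id_id,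
    det_fromBlocks_zero₁₁ X Y N hN, Fintype.card_fin]
  ring
end
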